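/- Let q₁,...,q_j be positive integers each at most Q with L = lcm(q₁,...,q_j). Then for every ε > 0, ∑_{n=1}^{L} ∏_{i=1}^{j} gcd(q_i, n) ≤ C(ε, j) · Q^{j + ε}. -/

import Mathlib

/-!
Expanding `gcd(q, n) = ∑_{e ∣ gcd(q, n)} φ(e)` writes `∏ᵢ gcd(qᵢ, n)` as a sum over tuples `d`
with `dᵢ ∣ qᵢ` of `∏ᵢ φ(dᵢ)`, the term being present exactly when `lcm d ∣ n`. Over the period
`1 ≤ n ≤ L` a tuple therefore contributes `∏ᵢ φ(dᵢ) · L / lcm d`, which is at most `∏ᵢ qᵢ`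
because `L ∣ lcm d · ∏ᵢ (qᵢ / dᵢ)`. So the sum is at most `∏ᵢ τ(qᵢ) qᵢ`, and the divisor bound
`τ(q) ≪_δ q^δ` with `jδ ≤ ε` finishes the proof.
-/

open Finset Real

section DivisorBound

variable {δ : ℝ}

lemma add_one_le_mul_rpow_of_two_le (hδ : 0 < δ) {x : ℝ} (hx : 2 ≤ x) (a : ℕ) :
    (a + 1 : ℝ) ≤ (1 + (δ * log 2)⁻¹) * (x ^ a) ^ δ := by
  set c := δ * log 2
  have hc : 0 < c := mul_pos hδ (log_pos one_lt_two)
  have hexp : 1 + a * c ≤ (x ^ a) ^ δ := calc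
    1 + a * c ≤ exp (a * c) := by linarith [add_one_le_exp (a * c)]
    _ = ((2 : ℝ) ^ a) ^ δ := by
      rw [← rpow_natCast_mul zero_le_two, rpow_def_of_pos two_pos]; congr 1; ring
    _ ≤ (x ^ a) ^ δ := by gcongr
  calc (a + 1 : ℝ) ≤ a + 1 + (a * c + c⁻¹) := le_add_of_nonneg_right (by positivity)
    _ = (1 + c⁻¹) * (1 + a * c) := by field_simp; ring
    _ ≤ (1 + c⁻¹) * (x ^ a) ^ δ := by gcongr

lemma add_one_le_rpow_of_two_le_rpow {x : ℝ} (hx : 0 ≤ x) (h2 : 2 ≤ x ^ δ) (a : ℕ) :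
    (a + 1 : ℝ) ≤ (x ^ a) ^ δ := calc
  (a + 1 : ℝ) ≤ 2 ^ a := by exact_mod_cast Nat.lt_two_pow_self
  _ ≤ (x ^ δ) ^ a := by gcongr
  _ = (x ^ a) ^ δ := by rw [← rpow_natCast_mul hx, ← rpow_mul_natCast hx, mul_comm]

theorem Nat.exists_card_divisors_le_mul_rpow (hδ : 0 < δ) :
    ∃ C : ℝ, 0 < C ∧ ∀ n : ℕ, n ≠ 0 → (#n.divisors : ℝ) ≤ C * (n : ℝ) ^ δ := by
  set B : ℝ := 1 + (δ * Real.log 2)⁻¹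
  have hB : 1 ≤ B := le_add_of_nonneg_right (by positivity)
  -- every prime `p ≥ P` has `p ^ δ ≥ 2`, so only the primes below `P` cost a factor `B`
  set P := ⌈(2 : ℝ) ^ δ⁻¹⌉₊
  refine ⟨B ^ P, by positivity, fun n hn => ?_⟩
  have hprime : ∀ p ∈ n.primeFactors, (n.factorization p + 1 : ℝ) ≤
      (if p < P then B else 1) * ((p : ℝ) ^ n.factorization p) ^ δ := by
    intro p hp
    have hp2 : (2 : ℝ) ≤ p := by exact_mod_cast (Nat.prime_of_mem_primeFactors hp).two_le
    split_ifs with hpP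
    · exact add_one_le_mul_rpow_of_two_le hδ hp2 _
    · rw [one_mul]
      refine add_one_le_rpow_of_two_le_rpow (by positivity) ?_ _
      calc (2 : ℝ) = ((2 : ℝ) ^ δ⁻¹) ^ δ := by
            rw [← rpow_mul zero_le_two, inv_mul_cancel₀ hδ.ne', rpow_one]
        _ ≤ (p : ℝ) ^ δ := by
            gcongr
            exact (Nat.le_ceil _).trans (by exact_mod_cast not_lt.mp hpP)
  have hsmall : ∏ p ∈ n.primeFactors, (if p < P then B else 1) ≤ B ^ P := by
    rw [← prod_filter, prod_const]
    refine pow_le_pow_right₀ hB ((card_le_card fun p hp => ?_).trans (card_range P).le)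
    exact mem_range.2 (mem_filter.1 hp).2
  have hfactor :
      ∏ p ∈ n.primeFactors, ((p : ℝ) ^ n.factorization p) ^ δ = (n : ℝ) ^ δ := by
    rw [finsetProd_rpow _ _ fun _ _ => by positivity]
    congr 1
    exact_mod_cast (Nat.prod_primeFactors_pow_factorization hn).symm
  calc (#n.divisors : ℝ) = ∏ p ∈ n.primeFactors, (n.factorization p + 1 : ℝ) := by
        rw [Nat.card_divisors hn]; push_cast; rfl
    _ ≤ ∏ p ∈ n.primeFactors,
          (if p < P then B else 1) * ((p : ℝ) ^ n.factorization p) ^ δ :=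
        prod_le_prod (fun _ _ => by positivity) hprime
    _ = (∏ p ∈ n.primeFactors, if p < P then B else 1) * (n : ℝ) ^ δ := by
        rw [prod_mul_distrib, hfactor]
    _ ≤ B ^ P * (n : ℝ) ^ δ := by gcongr

end DivisorBound

namespace Nat

theorem gcd_eq_sum_totient (q n : ℕ) (hq : q ≠ 0) :
    gcd q n = ∑ e ∈ q.divisors, if e ∣ n then φ e else 0 := by
  rw [← sum_filter, ← (gcd q n).sum_totient]
  congr 1
  ext e
  simp [Nat.dvd_gcd_iff, hq]

variable {ι : Type*} [Fintype ι]

theorem prod_gcd_eq_sum_piFinset [DecidableEq ι] (q : ι → ℕ) (hq : ∀ i, q i ≠ 0)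
    (n : ℕ) :
    ∏ i, gcd (q i) n = ∑ d ∈ Fintype.piFinset (fun i => (q i).divisors),
      ∏ i, if d i ∣ n then φ (d i) else 0 := by
  simp_rw [gcd_eq_sum_totient _ _ (hq _)]
  exact prod_univ_sum _ _

theorem sum_Icc_prod_ite_dvd (d f : ι → ℕ) (L : ℕ) :
    ∑ n ∈ Icc 1 L, ∏ i, (if d i ∣ n then f i else 0) = (∏ i, f i) * (L / univ.lcm d) := by
  simp_rw [prod_ite_zero, ← Finset.lcm_dvd_iff, sum_ite, sum_const_zero, add_zero, sum_const,
    smul_eq_mul, mul_comm]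
  congr 1
  exact Nat.Ioc_filter_dvd_card_eq_div L _

theorem lcm_dvd_lcm_mul_prod_div {d q : ι → ℕ} (hdq : ∀ i, d i ∣ q i) :
    univ.lcm q ∣ univ.lcm d * ∏ i, q i / d i :=
  Finset.lcm_dvd fun i _ => by
    have := mul_dvd_mul (dvd_lcm (f := d) (mem_univ i))
      (dvd_prod_of_mem (fun i => q i / d i) (mem_univ i))
    rwa [Nat.mul_div_cancel' (hdq i)] at this

theorem sum_Icc_prod_ite_dvd_totient_le {d q : ι → ℕ} (hdq : ∀ i, d i ∣ q i)
    (hq : ∀ i, 0 < q i) :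
    ∑ n ∈ Icc 1 (univ.lcm q), ∏ i, (if d i ∣ n then φ (d i) else 0) ≤ ∏ i, q i := by
  have hd : ∀ i, 0 < d i := fun i => Nat.pos_of_dvd_of_pos (hdq i) (hq i)
  have hqd : ∀ i, 0 < q i / d i := fun i => Nat.div_pos (Nat.le_of_dvd (hq i) (hdq i)) (hd i)
  have hD : 0 < univ.lcm d :=
    Nat.pos_of_ne_zero (Finset.lcm_eq_zero_iff.not.2 (by simp [(hd _).ne']))
  rw [sum_Icc_prod_ite_dvd]
  calc (∏ i, φ (d i)) * (univ.lcm q / univ.lcm d) ≤ (∏ i, d i) * ∏ i, q i / d i := by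
        gcongr with i
        · exact totient_le _
        · exact Nat.div_le_of_le_mul (Nat.le_of_dvd (mul_pos hD (prod_pos fun i _ => hqd i))
            (lcm_dvd_lcm_mul_prod_div hdq))
    _ = ∏ i, q i := by
        rw [← prod_mul_distrib]
        exact prod_congr rfl fun i _ => Nat.mul_div_cancel' (hdq i)

theorem sum_Icc_lcm_prod_gcd_le (q : ι → ℕ) (hq : ∀ i, 0 < q i) :
    ∑ n ∈ Icc 1 (univ.lcm q), ∏ i, gcd (q i) n ≤ ∏ i, #(q i).divisors * q i := by
  classical
  calc ∑ n ∈ Icc 1 (univ.lcm q), ∏ i, gcd (q i) n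
      = ∑ d ∈ Fintype.piFinset (fun i => (q i).divisors),
          ∑ n ∈ Icc 1 (univ.lcm q), ∏ i, if d i ∣ n then φ (d i) else 0 := by
        simp_rw [prod_gcd_eq_sum_piFinset q fun i => (hq i).ne']
        exact sum_comm
    _ ≤ ∑ _d ∈ Fintype.piFinset (fun i => (q i).divisors), ∏ i, q i :=
        sum_le_sum fun d hd => sum_Icc_prod_ite_dvd_totient_le
          (fun i => Nat.dvd_of_mem_divisors (Fintype.mem_piFinset.1 hd i)) hq
    _ = ∏ i, #(q i).divisors * q i := by
        rw [sum_const, Fintype.card_piFinset, smul_eq_mul, prod_mul_distrib]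

end Nat

theorem stmt_11_general (ε : ℝ) (hε : 0 < ε) (j : ℕ) :
    ∃ C : ℝ, 0 < C ∧ ∀ (Q : ℕ) (q : Fin j → ℕ), 1 ≤ Q →
      (∀ i, 1 ≤ q i) → (∀ i, q i ≤ Q) →
      (∑ n ∈ Finset.Icc 1 (Finset.univ.lcm q), ∏ i, (Nat.gcd (q i) n : ℝ)) ≤
        C * (Q : ℝ) ^ ((j : ℝ) + ε) := by
  set δ := ε / (j + 1)
  have hjδ : j * δ ≤ ε := by
    rw [mul_div_assoc', div_le_iff₀ (by positivity)]
    nlinarith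
  obtain ⟨C, hC, hτ⟩ := Nat.exists_card_divisors_le_mul_rpow (δ := δ) (by positivity)
  refine ⟨C ^ j, by positivity, fun Q q hQ hq hqQ => ?_⟩
  have hQ1 : (1 : ℝ) ≤ Q := by exact_mod_cast hQ
  have hfactor (i : Fin j) : (#(q i).divisors * q i : ℝ) ≤ C * (Q : ℝ) ^ (1 + δ) := calc
    (#(q i).divisors * q i : ℝ) ≤ C * (q i : ℝ) ^ δ * q i := by
        gcongr
        exact hτ _ (Nat.one_le_iff_ne_zero.mp (hq i))
    _ ≤ C * (Q : ℝ) ^ δ * Q := by gcongr <;> exact_mod_cast hqQ i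
    _ = C * (Q : ℝ) ^ (1 + δ) := by rw [rpow_add (by positivity), rpow_one]; ring
  calc (∑ n ∈ Icc 1 (univ.lcm q), ∏ i, (Nat.gcd (q i) n : ℝ))
      ≤ ∏ i, (#(q i).divisors * q i : ℝ) := by exact_mod_cast Nat.sum_Icc_lcm_prod_gcd_le q hq
    _ ≤ ∏ _i : Fin j, C * (Q : ℝ) ^ (1 + δ) :=
        prod_le_prod (fun _ _ => by positivity) fun i _ => hfactor i
    _ = C ^ j * (Q : ℝ) ^ (j * (1 + δ)) := by
        rw [prod_const, card_univ, Fintype.card_fin, mul_pow, mul_comm (j : ℝ),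
          rpow_mul_natCast (by positivity)]
    _ ≤ C ^ j * (Q : ℝ) ^ ((j : ℝ) + ε) := by
        gcongr
        linarith

theorem stmt_11 (ε : ℝ) (hε : 0 < ε) (j : ℕ) (hj : 1 ≤ j) :
    ∃ C : ℝ, 0 < C ∧ ∀ (Q : ℕ) (q : Fin j → ℕ), 1 ≤ Q →
      (∀ i, 1 ≤ q i) → (∀ i, q i ≤ Q) →
      (∑ n ∈ Finset.Icc 1 (Finset.univ.lcm q), ∏ i, (Nat.gcd (q i) n : ℝ)) ≤
        C * (Q : ℝ) ^ ((j : ℝ) + ε) :=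
  stmt_11_general ε hε j
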